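/- arXiv:1109.5415 — 7 statements merged into one kernel-verified Lean document; each statement's English description precedes it below -/
import Mathlib

section
/- Optimality of the alias-suppressing prefilter (Theorem 3, integral/capacity form): Let f_s > 0 and P > 0. Let H, S : ℝ → ℂ and 𝒮η : ℝ → ℝ with 𝒮η f > 0 for all f, and set I := Set.Icc (−f_s/2) (f_s/2). For f ∈ I define γ_S(f) := (∑'_{l:ℤ} ‖H(f − l f_s)‖² · ‖S(f − l f_s)‖²) / (∑'_{l:ℤ} ‖S(f − l f_s)‖² · 𝒮η(f − l f_s)) and γ⋆(f) := ⨆_{l:ℤ} ‖H(f − l f_s)‖² / 𝒮η(f − l f_s). Assume: for every f ∈ I both series defining γ_S(f) are summable, the denominator series has positive sum, the family l ↦ ‖H(f − l f_s)‖²/𝒮η(f − l f_s) is bounded above, and γ_S(f) > 0; the functions γ_S and γ⋆ are measurable on I and there exists B with γ⋆(f) ≤ B for all f ∈ I. Let ν_S, ν⋆ > 0 be reals satisfying ∫_{f ∈ I} max (ν_S − 1/γ_S(f)) 0 = P and ∫_{f ∈ I} max (ν⋆ − 1/γ⋆(f)) 0 = P. Then ∫_{f ∈ I} (1/2) · max (Real.log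 (ν_S · γ_S(f))) 0 ≤ ∫_{f ∈ I} (1/2) · max (Real.log (ν⋆ · γ⋆(f))) 0. -/
/-!
Since `‖H‖²‖S‖² = (‖H‖²/𝒮η) · (‖S‖²𝒮η)`, the aliased SNR `γ_S(f)` is a weighted average of the
ratios `‖H(f - l f_s)‖²/𝒮η(f - l f_s)`, hence `γ_S ≤ γ⋆` pointwise. Writing the rate of a
water-filling allocation as `log⁺(ν γ) = log (1 + p γ)` with power `p = [ν - 1/γ]⁺`, concavity of
`log` and the complementary slackness of water-filling give the Lagrangian inequality
`log⁺(ν_S γ_S) ≤ log⁺(ν⋆ γ⋆) + (p_S - p⋆) / ν⋆`. Both allocations spend the same power `P`, so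
the correction term integrates to zero.
-/

open MeasureTheory

section Summation

variable {ι : Type*}

theorem tsum_mul_le_ciSup_mul_tsum {a w : ι → ℝ} (ha : BddAbove (Set.range a))
    (hw : ∀ i, 0 ≤ w i) (haw : Summable fun i => a i * w i) (hws : Summable w) :
    ∑' i, a i * w i ≤ (⨆ i, a i) * ∑' i, w i := by
  rw [← tsum_mul_left]
  exact haw.tsum_le_tsum (fun i => mul_le_mul_of_nonneg_right (le_ciSup ha i) (hw i))
    (hws.mul_left _)

theorem tsum_mul_div_tsum_mul_le_ciSup_div {a c d : ι → ℝ} (hd : ∀ i, 0 < d i)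
    (hc : ∀ i, 0 ≤ c i) (hac : Summable fun i => a i * c i) (hcd : Summable fun i => c i * d i)
    (hpos : 0 < ∑' i, c i * d i) (hbdd : BddAbove (Set.range fun i => a i / d i)) :
    (∑' i, a i * c i) / (∑' i, c i * d i) ≤ ⨆ i, a i / d i := by
  have hsplit : (fun i => a i * c i) = fun i => a i / d i * (c i * d i) := by
    funext i
    field_simp [(hd i).ne']
  rw [div_le_iff₀ hpos, hsplit]
  rw [hsplit] at hac
  exact tsum_mul_le_ciSup_mul_tsum hbdd (fun i => mul_nonneg (hc i) (hd i).le) hac hcd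

end Summation

namespace Real

theorem log_le_log_add_sub_div {x y : ℝ} (hx : 0 < x) (hy : 0 < y) :
    log x ≤ log y + (x - y) / y := by
  have h := log_le_sub_one_of_pos (div_pos hx hy)
  rw [log_div hx.ne' hy.ne', div_sub_one hy.ne'] at h
  linarith

theorem max_log_mul_zero_eq_log_one_add {ν g : ℝ} (hν : 0 < ν) (hg : 0 < g) :
    max (log (ν * g)) 0 = log (1 + max (ν - 1 / g) 0 * g) := by
  rcases le_or_gt (1 / g) ν with h | h
  · have h1 : 1 ≤ ν * g := by rwa [div_le_iff₀ hg] at h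
    rw [max_eq_left (sub_nonneg.2 h), max_eq_left (log_nonneg h1)]
    congr 1
    field_simp
    ring
  · have h1 : ν * g < 1 := by rwa [lt_div_iff₀ hg] at h
    rw [max_eq_right (by linarith : ν - 1 / g ≤ 0), zero_mul, add_zero, log_one,
      max_eq_right (log_nonpos (by positivity) h1.le)]

/-- Complementary slackness: the marginal rate `g / (1 + q g)` equals `1 / ν` where the
water-filling power `q` is positive and is at most `1 / ν` where it vanishes. -/
theorem sub_mul_div_one_add_le_sub_div {ν g p : ℝ} (hν : 0 < ν) (hg : 0 < g) (hp : 0 ≤ p) :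
    (p - max (ν - 1 / g) 0) * g / (1 + max (ν - 1 / g) 0 * g) ≤ (p - max (ν - 1 / g) 0) / ν := by
  rcases le_or_gt (1 / g) ν with h | h
  · rw [max_eq_left (sub_nonneg.2 h)]
    apply le_of_eq
    field_simp
    ring
  · have hg' : g ≤ 1 / ν := by
      rw [le_div_iff₀ hν]
      rw [lt_div_iff₀ hg] at h
      linarith
    rw [max_eq_right (by linarith), sub_zero, zero_mul, add_zero, div_one, div_eq_mul_one_div]
    exact mul_le_mul_of_nonneg_left hg' hp

theorem max_log_mul_zero_le_add_sub_div {ν ν' g g' : ℝ} (hν : 0 < ν) (hν' : 0 < ν')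
    (hg : 0 < g) (hgg' : g ≤ g') :
    max (log (ν * g)) 0 ≤
      max (log (ν' * g')) 0 + (max (ν - 1 / g) 0 - max (ν' - 1 / g') 0) / ν' := by
  have hg' : 0 < g' := hg.trans_le hgg'
  rw [max_log_mul_zero_eq_log_one_add hν hg, max_log_mul_zero_eq_log_one_add hν' hg']
  set p := max (ν - 1 / g) 0
  set q := max (ν' - 1 / g') 0
  have hp : 0 ≤ p := le_max_right _ _
  have hq : 0 ≤ q := le_max_right _ _
  calc log (1 + p * g)
      ≤ log (1 + p * g') := log_le_log (by positivity) (by gcongr)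
    _ ≤ log (1 + q * g') + (1 + p * g' - (1 + q * g')) / (1 + q * g') :=
        log_le_log_add_sub_div (by positivity) (by positivity)
    _ = log (1 + q * g') + (p - q) * g' / (1 + q * g') := by ring_nf
    _ ≤ log (1 + q * g') + (p - q) / ν' :=
        (add_le_add_iff_left _).2 (sub_mul_div_one_add_le_sub_div hν' hg' hp)

end Real

theorem integral_le_of_le_add_sub_div {α : Type*} [MeasurableSpace α] {μ : Measure α}
    {u v p q : α → ℝ} {c : ℝ} (hu : AEStronglyMeasurable u μ) (hu0 : 0 ≤ᵐ[μ] u)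
    (hv : Integrable v μ) (hp : Integrable p μ) (hq : Integrable q μ)
    (hpq : ∫ x, p x ∂μ = ∫ x, q x ∂μ) (huv : ∀ᵐ x ∂μ, u x ≤ v x + (p x - q x) / c) :
    ∫ x, u x ∂μ ≤ ∫ x, v x ∂μ := by
  have hr : Integrable (fun x => (p x - q x) / c) μ := (hp.sub hq).div_const c
  have hw : Integrable (fun x => v x + (p x - q x) / c) μ := hv.add hr
  have hui : Integrable u μ := by
    refine hw.mono' hu ?_
    filter_upwards [hu0, huv] with x hx0 hx
    rwa [Real.norm_of_nonneg hx0]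
  calc ∫ x, u x ∂μ ≤ ∫ x, v x + (p x - q x) / c ∂μ := integral_mono_ae hui hw huv
    _ = ∫ x, v x ∂μ := by
        rw [integral_add hv hr, integral_div, integral_sub hp hq, hpq, sub_self, zero_div,
          add_zero]

theorem capacity_le_capacity_of_optimal_prefilter_general
    (fs P : ℝ) (hP : 0 < P)
    (H S : ℝ → ℂ) (Sη : ℝ → ℝ) (hSη : ∀ f, 0 < Sη f)
    (γS γstar : ℝ → ℝ)
    (hγSdef : ∀ f ∈ Set.Icc (-(fs / 2)) (fs / 2),
      γS f = (∑' l : ℤ, ‖H (f - l * fs)‖ ^ 2 * ‖S (f - l * fs)‖ ^ 2) /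
             (∑' l : ℤ, ‖S (f - l * fs)‖ ^ 2 * Sη (f - l * fs)))
    (hγstardef : ∀ f ∈ Set.Icc (-(fs / 2)) (fs / 2),
      γstar f = ⨆ l : ℤ, ‖H (f - l * fs)‖ ^ 2 / Sη (f - l * fs))
    (hsumNum : ∀ f ∈ Set.Icc (-(fs / 2)) (fs / 2),
      Summable (fun l : ℤ => ‖H (f - l * fs)‖ ^ 2 * ‖S (f - l * fs)‖ ^ 2))
    (hsumDen : ∀ f ∈ Set.Icc (-(fs / 2)) (fs / 2),
      Summable (fun l : ℤ => ‖S (f - l * fs)‖ ^ 2 * Sη (f - l * fs)))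
    (hDenPos : ∀ f ∈ Set.Icc (-(fs / 2)) (fs / 2),
      0 < ∑' l : ℤ, ‖S (f - l * fs)‖ ^ 2 * Sη (f - l * fs))
    (hBdd : ∀ f ∈ Set.Icc (-(fs / 2)) (fs / 2),
      BddAbove (Set.range fun l : ℤ => ‖H (f - l * fs)‖ ^ 2 / Sη (f - l * fs)))
    (hγSpos : ∀ f ∈ Set.Icc (-(fs / 2)) (fs / 2), 0 < γS f)
    (hmeasS : AEStronglyMeasurable γS (volume.restrict (Set.Icc (-(fs / 2)) (fs / 2))))
    (hmeasStar : AEStronglyMeasurable γstar (volume.restrict (Set.Icc (-(fs / 2)) (fs / 2))))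
    (B : ℝ) (hB : ∀ f ∈ Set.Icc (-(fs / 2)) (fs / 2), γstar f ≤ B)
    (νS νstar : ℝ) (hνS : 0 < νS) (hνstar : 0 < νstar)
    (hpowS : ∫ f in Set.Icc (-(fs / 2)) (fs / 2), max (νS - 1 / γS f) 0 = P)
    (hpowStar : ∫ f in Set.Icc (-(fs / 2)) (fs / 2), max (νstar - 1 / γstar f) 0 = P) :
    ∫ f in Set.Icc (-(fs / 2)) (fs / 2), (1 / 2) * max (Real.log (νS * γS f)) 0 ≤
      ∫ f in Set.Icc (-(fs / 2)) (fs / 2), (1 / 2) * max (Real.log (νstar * γstar f)) 0 := by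
  set I := Set.Icc (-(fs / 2)) (fs / 2)
  have hle : ∀ f ∈ I, γS f ≤ γstar f := fun f hf => by
    rw [hγSdef f hf, hγstardef f hf]
    exact tsum_mul_div_tsum_mul_le_ciSup_div (fun _ => hSη _) (fun _ => sq_nonneg _)
      (hsumNum f hf) (hsumDen f hf) (hDenPos f hf) (hBdd f hf)
  have hmS := hmeasS.aemeasurable
  have hmStar := hmeasStar.aemeasurable
  have hrateStar : IntegrableOn (fun f => max (Real.log (νstar * γstar f)) 0) I := by
    refine Integrable.of_bound (by fun_prop : AEMeasurable _ _).aestronglyMeasurable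
      (max (Real.log (νstar * B)) 0) ?_
    filter_upwards [ae_restrict_mem measurableSet_Icc] with f hf
    have hpos : 0 < νstar * γstar f := mul_pos hνstar ((hγSpos f hf).trans_le (hle f hf))
    rw [Real.norm_of_nonneg (le_max_right _ _)]
    gcongr
    exact hB f hf
  rw [integral_const_mul, integral_const_mul]
  refine mul_le_mul_of_nonneg_left ?_ (by norm_num)
  refine integral_le_of_le_add_sub_div (c := νstar)
    (p := fun f => max (νS - 1 / γS f) 0) (q := fun f => max (νstar - 1 / γstar f) 0)
    (by fun_prop : AEMeasurable _ _).aestronglyMeasurable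
    (ae_of_all _ fun _ => le_max_right _ _) hrateStar
    (.of_integral_ne_zero (hpowS ▸ hP.ne')) (.of_integral_ne_zero (hpowStar ▸ hP.ne'))
    (hpowS.trans hpowStar.symm) ?_
  filter_upwards [ae_restrict_mem measurableSet_Icc] with f hf
  exact Real.max_log_mul_zero_le_add_sub_div hνS hνstar (hγSpos f hf) (hle f hf)

/-- Optimality of the alias-suppressing prefilter (Theorem 3, integral/capacity
form): the water-filling capacity obtained with any prefilter `S` is at most
the water-filling capacity of the optimal (alias-suppressing) prefilter, whose
aliased SNR is `γ⋆(f) = ⨆ l, ‖H(f − l f_s)‖² / 𝒮η(f − l f_s)`. -/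
theorem capacity_le_capacity_of_optimal_prefilter
    (fs P : ℝ) (hfs : 0 < fs) (hP : 0 < P)
    (H S : ℝ → ℂ) (Sη : ℝ → ℝ) (hSη : ∀ f, 0 < Sη f)
    (γS γstar : ℝ → ℝ)
    (hγSdef : ∀ f ∈ Set.Icc (-(fs / 2)) (fs / 2),
      γS f = (∑' l : ℤ, ‖H (f - l * fs)‖ ^ 2 * ‖S (f - l * fs)‖ ^ 2) /
             (∑' l : ℤ, ‖S (f - l * fs)‖ ^ 2 * Sη (f - l * fs)))
    (hγstardef : ∀ f ∈ Set.Icc (-(fs / 2)) (fs / 2),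
      γstar f = ⨆ l : ℤ, ‖H (f - l * fs)‖ ^ 2 / Sη (f - l * fs))
    (hsumNum : ∀ f ∈ Set.Icc (-(fs / 2)) (fs / 2),
      Summable (fun l : ℤ => ‖H (f - l * fs)‖ ^ 2 * ‖S (f - l * fs)‖ ^ 2))
    (hsumDen : ∀ f ∈ Set.Icc (-(fs / 2)) (fs / 2),
      Summable (fun l : ℤ => ‖S (f - l * fs)‖ ^ 2 * Sη (f - l * fs)))
    (hDenPos : ∀ f ∈ Set.Icc (-(fs / 2)) (fs / 2),
      0 < ∑' l : ℤ, ‖S (f - l * fs)‖ ^ 2 * Sη (f - l * fs))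
    (hBdd : ∀ f ∈ Set.Icc (-(fs / 2)) (fs / 2),
      BddAbove (Set.range fun l : ℤ => ‖H (f - l * fs)‖ ^ 2 / Sη (f - l * fs)))
    (hγSpos : ∀ f ∈ Set.Icc (-(fs / 2)) (fs / 2), 0 < γS f)
    (hmeasS : AEStronglyMeasurable γS (volume.restrict (Set.Icc (-(fs / 2)) (fs / 2))))
    (hmeasStar : AEStronglyMeasurable γstar (volume.restrict (Set.Icc (-(fs / 2)) (fs / 2))))
    (B : ℝ) (hB : ∀ f ∈ Set.Icc (-(fs / 2)) (fs / 2), γstar f ≤ B)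
    (νS νstar : ℝ) (hνS : 0 < νS) (hνstar : 0 < νstar)
    (hpowS : ∫ f in Set.Icc (-(fs / 2)) (fs / 2), max (νS - 1 / γS f) 0 = P)
    (hpowStar : ∫ f in Set.Icc (-(fs / 2)) (fs / 2), max (νstar - 1 / γstar f) 0 = P) :
    ∫ f in Set.Icc (-(fs / 2)) (fs / 2), (1 / 2) * max (Real.log (νS * γS f)) 0 ≤
      ∫ f in Set.Icc (-(fs / 2)) (fs / 2), (1 / 2) * max (Real.log (νstar * γstar f)) 0 :=
  capacity_le_capacity_of_optimal_prefilter_general fs P hP H S Sη hSη γS γstar hγSdef hγstardef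
    hsumNum hsumDen hDenPos hBdd hγSpos hmeasS hmeasStar B hB νS νstar hνS hνstar hpowS hpowStar
end

section
/- Monotonicity of water-filling capacity in the SNR profile: Let W > 0, P > 0, and let γ₁, γ₂ : ℝ → ℝ be measurable functions with 0 < γ₂(f) and γ₂(f) ≤ γ₁(f) for every f ∈ I := Set.Icc (−W) W, and suppose there exists B with γ₁(f) ≤ B for all f ∈ I. Let ν₁, ν₂ > 0 be reals satisfying ∫_{f ∈ I} max (ν₁ − 1/γ₁(f)) 0 = P and ∫_{f ∈ I} max (ν₂ − 1/γ₂(f)) 0 = P. Then ∫_{f ∈ I} (1/2) · max (Real.log (ν₂ · γ₂(f))) 0 ≤ ∫_{f ∈ I} (1/2) · max (Real.log (ν₁ · γ₁(f))) 0. -/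
/-!
Write `p(ν, γ) = [ν − 1/γ]⁺` for the water-filling power at SNR `γ` and level `ν`. Then
`log(1 + p(ν, γ) γ) = log⁺(ν γ)`, and `p(ν, γ)` maximises the pointwise Lagrangian
`p ↦ log(1 + p γ) − p/ν` over `p ≥ 0`. Hence, with `pᵢ = p(νᵢ, γᵢ)`,
`log⁺(ν₂ γ₂) − p₂/ν₁ ≤ log(1 + p₂ γ₁) − p₂/ν₁ ≤ log⁺(ν₁ γ₁) − p₁/ν₁` pointwise, and integrating
over the band, both power terms integrate to `P/ν₁`.
-/

open MeasureTheory Real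

section Pointwise

variable {ν γ : ℝ}

lemma log_one_add_max_sub_inv_mul (hν : 0 < ν) (hγ : 0 < γ) :
    log (1 + max (ν - 1 / γ) 0 * γ) = max (log (ν * γ)) 0 := by
  rcases le_total ν (1 / γ) with hlow | hhigh
  · have hνγ : ν * γ ≤ 1 := by rwa [le_div_iff₀ hγ] at hlow
    rw [max_eq_right (sub_nonpos.mpr hlow), max_eq_right (log_nonpos (by positivity) hνγ)]
    simp
  · have hνγ : 1 ≤ ν * γ := by rwa [div_le_iff₀ hγ] at hhigh
    rw [max_eq_left (sub_nonneg.mpr hhigh), max_eq_left (log_nonneg hνγ)]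
    congr 1
    field_simp
    ring

lemma log_one_add_mul_sub_div_le (hν : 0 < ν) (hγ : 0 < γ) {p : ℝ} (hp : 0 ≤ p) :
    log (1 + p * γ) - p / ν ≤ max (log (ν * γ)) 0 - max (ν - 1 / γ) 0 / ν := by
  rcases le_total ν (1 / γ) with hlow | hhigh
  · have hνγ : ν * γ ≤ 1 := by rwa [le_div_iff₀ hγ] at hlow
    rw [max_eq_right (sub_nonpos.mpr hlow), max_eq_right (log_nonpos (by positivity) hνγ)]
    have hlog : log (1 + p * γ) ≤ p * γ := by
      linarith [log_le_sub_one_of_pos (by positivity : 0 < 1 + p * γ)]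
    have hpγ : p * γ ≤ p / ν := by
      rw [le_div_iff₀ hν, mul_assoc, mul_comm γ]
      exact mul_le_of_le_one_right hp hνγ
    rw [zero_div, sub_zero]
    linarith
  · have hνγ : 0 < ν * γ := by positivity
    rw [max_eq_left (sub_nonneg.mpr hhigh),
      max_eq_left (log_nonneg (by rwa [div_le_iff₀ hγ] at hhigh))]
    -- concavity of `log` at the water level `ν γ = 1 + p(ν, γ) γ`
    have hconc : log (1 + p * γ) - log (ν * γ) ≤ (1 + p * γ) / (ν * γ) - 1 := by
      rw [← log_div (by positivity) hνγ.ne']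
      exact log_le_sub_one_of_pos (by positivity)
    have hlin : (1 + p * γ) / (ν * γ) - 1 = p / ν - (ν - 1 / γ) / ν := by
      field_simp
      ring
    linarith

lemma waterfilling_lagrangian_mono {a b ν₁ ν₂ : ℝ} (hν₁ : 0 < ν₁) (hν₂ : 0 < ν₂) (hb : 0 < b)
    (hba : b ≤ a) :
    max (log (ν₂ * b)) 0 - max (ν₂ - 1 / b) 0 / ν₁ ≤
      max (log (ν₁ * a)) 0 - max (ν₁ - 1 / a) 0 / ν₁ := by
  have hp₂ : 0 ≤ max (ν₂ - 1 / b) 0 := le_max_right _ _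
  rw [← log_one_add_max_sub_inv_mul hν₂ hb]
  calc log (1 + max (ν₂ - 1 / b) 0 * b) - max (ν₂ - 1 / b) 0 / ν₁
      ≤ log (1 + max (ν₂ - 1 / b) 0 * a) - max (ν₂ - 1 / b) 0 / ν₁ := by gcongr
    _ ≤ max (log (ν₁ * a)) 0 - max (ν₁ - 1 / a) 0 / ν₁ :=
      log_one_add_mul_sub_div_le hν₁ (hb.trans_le hba) hp₂

end Pointwise

section Integrability

variable {α : Type*} [MeasurableSpace α] {μ : Measure α} {s : Set α}

lemma integrableOn_max_sub_inv_zero (hs : MeasurableSet s) (hμs : μ s ≠ ⊤) {γ : α → ℝ}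
    (hγ : Measurable γ) (hpos : ∀ x ∈ s, 0 < γ x) (ν : ℝ) :
    IntegrableOn (fun x => max (ν - 1 / γ x) 0) s μ := by
  have hmeas : Measurable fun x => max (ν - 1 / γ x) 0 :=
    (measurable_const.sub (measurable_const.div hγ)).max measurable_const
  refine Measure.integrableOn_of_bounded (M := max ν 0) hμs hmeas.aestronglyMeasurable
    (ae_restrict_of_forall_mem hs fun x hx => ?_)
  have hinv : 0 ≤ 1 / γ x := (one_div_pos.mpr (hpos x hx)).le
  rw [norm_of_nonneg (le_max_right _ _)]
  exact max_le_max (by linarith) le_rfl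

lemma integrableOn_max_log_zero (hs : MeasurableSet s) (hμs : μ s ≠ ⊤) {g : α → ℝ}
    (hg : Measurable g) (hpos : ∀ x ∈ s, 0 < g x) {C : ℝ} (hC : ∀ x ∈ s, g x ≤ C) :
    IntegrableOn (fun x => max (log (g x)) 0) s μ := by
  refine Measure.integrableOn_of_bounded (M := C) hμs
    (hg.log.max measurable_const).aestronglyMeasurable
    (ae_restrict_of_forall_mem hs fun x hx => ?_)
  rw [norm_of_nonneg (le_max_right _ _)]
  exact max_le (by linarith [log_le_sub_one_of_pos (hpos x hx), hC x hx])
    ((hpos x hx).le.trans (hC x hx))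

end Integrability

theorem waterfilling_capacity_mono_general
    (W P : ℝ)
    (γ₁ γ₂ : ℝ → ℝ) (hmeas₁ : Measurable γ₁) (hmeas₂ : Measurable γ₂)
    (hpos : ∀ f ∈ Set.Icc (-W) W, 0 < γ₂ f)
    (hle : ∀ f ∈ Set.Icc (-W) W, γ₂ f ≤ γ₁ f)
    (B : ℝ) (hB : ∀ f ∈ Set.Icc (-W) W, γ₁ f ≤ B)
    (ν₁ ν₂ : ℝ) (hν₁ : 0 < ν₁) (hν₂ : 0 < ν₂)
    (hpow₁ : ∫ f in Set.Icc (-W) W, max (ν₁ - 1 / γ₁ f) 0 = P)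
    (hpow₂ : ∫ f in Set.Icc (-W) W, max (ν₂ - 1 / γ₂ f) 0 = P) :
    ∫ f in Set.Icc (-W) W, (1 / 2) * max (Real.log (ν₂ * γ₂ f)) 0 ≤
      ∫ f in Set.Icc (-W) W, (1 / 2) * max (Real.log (ν₁ * γ₁ f)) 0 := by
  have hI : MeasurableSet (Set.Icc (-W) W) := measurableSet_Icc
  have hμI : volume (Set.Icc (-W) W) ≠ ⊤ := measure_Icc_lt_top.ne
  have hpos₁ : ∀ f ∈ Set.Icc (-W) W, 0 < γ₁ f := fun f hf => (hpos f hf).trans_le (hle f hf)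
  have hcap₁ := integrableOn_max_log_zero (g := fun f => ν₁ * γ₁ f) hI hμI (by fun_prop)
    (fun f hf => mul_pos hν₁ (hpos₁ f hf)) (fun f hf => mul_le_mul_of_nonneg_left (hB f hf) hν₁.le)
  have hcap₂ := integrableOn_max_log_zero (g := fun f => ν₂ * γ₂ f) hI hμI (by fun_prop)
    (fun f hf => mul_pos hν₂ (hpos f hf))
    (fun f hf => mul_le_mul_of_nonneg_left ((hle f hf).trans (hB f hf)) hν₂.le)
  have hpow₁' := (integrableOn_max_sub_inv_zero hI hμI hmeas₁ hpos₁ ν₁).div_const ν₁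
  have hpow₂' := (integrableOn_max_sub_inv_zero hI hμI hmeas₂ hpos ν₂).div_const ν₁
  have key : ∫ f in Set.Icc (-W) W, (max (log (ν₂ * γ₂ f)) 0 - max (ν₂ - 1 / γ₂ f) 0 / ν₁) ≤
      ∫ f in Set.Icc (-W) W, (max (log (ν₁ * γ₁ f)) 0 - max (ν₁ - 1 / γ₁ f) 0 / ν₁) :=
    setIntegral_mono_on (hcap₂.sub hpow₂') (hcap₁.sub hpow₁') hI
      (fun f hf => waterfilling_lagrangian_mono hν₁ hν₂ (hpos f hf) (hle f hf))
  rw [integral_sub hcap₂ hpow₂', integral_sub hcap₁ hpow₁', integral_div, integral_div, hpow₁,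
    hpow₂] at key
  rw [integral_const_mul, integral_const_mul]
  linarith

/-- Monotonicity of water-filling capacity in the SNR profile: if `γ₂ ≤ γ₁`
pointwise on the band `[−W, W]`, then the water-filling capacity of the
channel with SNR `γ₂` is at most that of the channel with SNR `γ₁`. -/
theorem waterfilling_capacity_mono
    (W P : ℝ) (hW : 0 < W) (hP : 0 < P)
    (γ₁ γ₂ : ℝ → ℝ) (hmeas₁ : Measurable γ₁) (hmeas₂ : Measurable γ₂)
    (hpos : ∀ f ∈ Set.Icc (-W) W, 0 < γ₂ f)
    (hle : ∀ f ∈ Set.Icc (-W) W, γ₂ f ≤ γ₁ f)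
    (B : ℝ) (hB : ∀ f ∈ Set.Icc (-W) W, γ₁ f ≤ B)
    (ν₁ ν₂ : ℝ) (hν₁ : 0 < ν₁) (hν₂ : 0 < ν₂)
    (hpow₁ : ∫ f in Set.Icc (-W) W, max (ν₁ - 1 / γ₁ f) 0 = P)
    (hpow₂ : ∫ f in Set.Icc (-W) W, max (ν₂ - 1 / γ₂ f) 0 = P) :
    ∫ f in Set.Icc (-W) W, (1 / 2) * max (Real.log (ν₂ * γ₂ f)) 0 ≤
      ∫ f in Set.Icc (-W) W, (1 / 2) * max (Real.log (ν₁ * γ₁ f)) 0 :=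
  waterfilling_capacity_mono_general W P γ₁ γ₂ hmeas₁ hmeas₂ hpos hle B hB ν₁ ν₂ hν₁ hν₂ hpow₁ hpow₂
end

section
/- Eigenvalue upper bounds for a coisometry compression of a diagonal matrix (Proposition 4, bound part): Let n be a finite type with decidable equality, M : ℕ, and let A : Matrix (Fin M) n ℂ satisfy A * Aᴴ = 1 (the rows of A are orthonormal). Let d : n → ℝ with 0 ≤ d i for all i, and set T := A * Matrix.diagonal (fun i => (d i : ℂ)) * Aᴴ. Suppose ι : Fin M → n is injective, d ∘ ι is antitone, and d j ≤ d (ι k) for every k : Fin M and every j outside the range of ι. Then T is Hermitian, and for every antitone function e : Fin M → ℝ that enumerates the eigenvalues of T with multiplicity (i.e., e = (the eigenvalue tuple of T given by the spectral theorem) composed with some permutation of Fin M), one has e k ≤ d (ι k) for every k : Fin M. -/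
open scoped Matrix

/-!
Courant–Fischer, one direction: if a subspace `S` of codimension at most `k` carries Rayleigh
quotients `≤ c`, then `S` meets the span of the top `k + 1` eigenvectors in a nonzero vector,
whose Rayleigh quotient is at least the `k`-th eigenvalue. For `T = A D Aᴴ` take `S` to be the
vectors `x` with `(Aᴴ x) (ι j) = 0` for `j < k`: since `Aᴴ` is an isometry,
`⟪x, T x⟫ = ∑ i, d i * ‖(Aᴴ x) i‖²` and `‖x‖² = ∑ i, ‖(Aᴴ x) i‖²`, and every `d i` still
weighted by a nonzero coordinate is at most `d (ι k)`.
-/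

section RayleighQuotient

open Module Submodule

variable {𝕜 E ι : Type*} [RCLike 𝕜] [NormedAddCommGroup E] [InnerProductSpace 𝕜 E] [Fintype ι]
  {T : E →ₗ[𝕜] E} {v : ι → E} {μ : ι → ℝ} {c : ℝ}

theorem mul_norm_sq_le_re_inner_of_mem_span_eigenvectors (hv : Orthonormal 𝕜 v)
    (hTv : ∀ i, T (v i) = (μ i : 𝕜) • v i) (hc : ∀ i, c ≤ μ i) {x : E}
    (hx : x ∈ span 𝕜 (Set.range v)) :
    c * ‖x‖ ^ 2 ≤ RCLike.re (inner 𝕜 x (T x)) := by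
  obtain ⟨a, rfl⟩ := (mem_span_range_iff_exists_fun 𝕜).mp hx
  have hTx : T (∑ i, a i • v i) = ∑ i, (a i * μ i) • v i := by
    simp only [map_sum, map_smul, hTv, smul_smul]
  rw [hTx, @norm_sq_eq_re_inner 𝕜, hv.inner_sum, hv.inner_sum, map_sum, map_sum, Finset.mul_sum]
  refine Finset.sum_le_sum fun i _ => ?_
  rw [← mul_assoc, RCLike.conj_mul, ← RCLike.ofReal_pow, ← RCLike.ofReal_mul, RCLike.ofReal_re,
    RCLike.ofReal_re, mul_comm]
  exact mul_le_mul_of_nonneg_left (hc i) (by positivity)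

theorem le_of_forall_re_inner_le [FiniteDimensional 𝕜 E] (hv : Orthonormal 𝕜 v)
    (hTv : ∀ i, T (v i) = (μ i : 𝕜) • v i) (hc : ∀ i, c ≤ μ i) {S : Submodule 𝕜 E}
    (hS : finrank 𝕜 E < Fintype.card ι + finrank 𝕜 S) {c' : ℝ}
    (hTS : ∀ x ∈ S, RCLike.re (inner 𝕜 x (T x)) ≤ c' * ‖x‖ ^ 2) : c ≤ c' := by
  obtain ⟨x, hxW, hxS, hx0⟩ : ∃ x ∈ span 𝕜 (Set.range v), x ∈ S ∧ x ≠ 0 := by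
    by_contra! h
    have hdisj := finrank_add_finrank_le_of_disjoint (disjoint_def.mpr h)
    rw [finrank_span_eq_card hv.linearIndependent] at hdisj
    omega
  exact le_of_mul_le_mul_right
    ((mul_norm_sq_le_re_inner_of_mem_span_eigenvectors hv hTv hc hxW).trans (hTS x hxS))
    (by positivity)

end RayleighQuotient

theorem LinearMap.finrank_le_card_add_finrank_ker {K V ι : Type*} [Field K] [AddCommGroup V]
    [Module K V] [FiniteDimensional K V] [Fintype ι] (f : V →ₗ[K] ι → K) :
    Module.finrank K V ≤ Fintype.card ι + Module.finrank K (ker f) := by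
  have hrange := (range f).finrank_le
  rw [Module.finrank_fintype_fun_eq_card] at hrange
  have := f.finrank_range_add_finrank_ker
  omega

namespace Matrix

variable {𝕜 m n : Type*} [RCLike 𝕜] [Fintype m] [DecidableEq m] [Fintype n] [DecidableEq n]

theorem IsHermitian.toEuclideanLin_eigenvectorBasis {A : Matrix n n 𝕜} (hA : A.IsHermitian)
    (j : n) :
    toEuclideanLin A (hA.eigenvectorBasis j) = (hA.eigenvalues j : 𝕜) • hA.eigenvectorBasis j := by
  rw [toLpLin_apply, hA.mulVec_eigenvectorBasis, RCLike.real_smul_eq_coe_smul (K := 𝕜)]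
  rfl

theorem inner_toEuclideanLin_mul_mul_conjTranspose (B : Matrix m n 𝕜) (D : Matrix n n 𝕜)
    (x : EuclideanSpace 𝕜 m) :
    inner 𝕜 x (toEuclideanLin (B * D * Bᴴ) x) =
      inner 𝕜 (toEuclideanLin Bᴴ x) (toEuclideanLin D (toEuclideanLin Bᴴ x)) := by
  rw [toLpLin_mul_same, toLpLin_mul_same, LinearMap.comp_apply, LinearMap.comp_apply,
    toEuclideanLin_conjTranspose_eq_adjoint]
  exact (LinearMap.adjoint_inner_left _ _ _).symm

theorem norm_toEuclideanLin_conjTranspose {B : Matrix m n 𝕜} (hB : B * Bᴴ = 1)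
    (x : EuclideanSpace 𝕜 m) : ‖toEuclideanLin Bᴴ x‖ = ‖x‖ := by
  have h := inner_toEuclideanLin_mul_mul_conjTranspose B 1 x
  simp only [Matrix.mul_one, hB, toLpLin_one, LinearMap.id_apply] at h
  rw [inner_self_eq_norm_sq_to_K, inner_self_eq_norm_sq_to_K] at h
  exact (pow_left_inj₀ (norm_nonneg _) (norm_nonneg _) two_ne_zero).mp (by exact_mod_cast h.symm)

theorem re_inner_toEuclideanLin_diagonal_le {d : n → ℝ} {c : ℝ} {y : EuclideanSpace 𝕜 n}
    (h : ∀ i, y i = 0 ∨ d i ≤ c) :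
    RCLike.re (inner 𝕜 y (toEuclideanLin (diagonal fun i => (d i : 𝕜)) y)) ≤ c * ‖y‖ ^ 2 := by
  rw [EuclideanSpace.inner_eq_star_dotProduct, EuclideanSpace.norm_sq_eq, Finset.mul_sum]
  simp only [ofLp_toLpLin, toLin'_apply, mulVec_diagonal, dotProduct, Pi.star_apply, map_sum]
  refine Finset.sum_le_sum fun i _ => ?_
  rcases h i with hyi | hdi
  · simp [hyi]
  rw [mul_assoc, RCLike.star_def, RCLike.mul_conj, ← RCLike.ofReal_pow, ← RCLike.ofReal_mul,
    RCLike.ofReal_re]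
  exact mul_le_mul_of_nonneg_right hdi (by positivity)

end Matrix

theorem apply_le_apply_of_forall_lt_ne {α β γ : Type*} [LinearOrder α] [Preorder γ]
    {ι : α → β} {d : β → γ} (hanti : Antitone (d ∘ ι)) {k : α}
    (hmax : ∀ j, j ∉ Set.range ι → d j ≤ d (ι k)) {i : β} (hi : ∀ j < k, ι j ≠ i) :
    d i ≤ d (ι k) := by
  by_cases hrange : i ∈ Set.range ι
  · obtain ⟨j, rfl⟩ := hrange
    exact hanti (not_lt.mp fun hjk => hi j hjk rfl)
  · exact hmax i hrange

theorem eigenvalues_coisometry_compression_le_general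
    {n : Type*} [Fintype n] [DecidableEq n] (M : ℕ)
    (A : Matrix (Fin M) n ℂ) (hA : A * Aᴴ = 1)
    (d : n → ℝ)
    (ι : Fin M → n)
    (hanti : Antitone (d ∘ ι))
    (hmax : ∀ k : Fin M, ∀ j, j ∉ Set.range ι → d j ≤ d (ι k)) :
    ∃ hT : (A * Matrix.diagonal (fun i => (d i : ℂ)) * Aᴴ).IsHermitian,
      ∀ e : Fin M → ℝ, Antitone e →
        (∃ σ : Equiv.Perm (Fin M), e = hT.eigenvalues ∘ σ) →
        ∀ k : Fin M, e k ≤ d (ι k) := by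
  have hD : (Matrix.diagonal fun i => (d i : ℂ)).IsHermitian :=
    Matrix.isHermitian_diagonal_of_self_adjoint _ (funext fun i => Complex.conj_ofReal (d i))
  refine ⟨Matrix.isHermitian_mul_mul_conjTranspose A hD, ?_⟩
  rintro e he ⟨σ, rfl⟩ k
  set hT := Matrix.isHermitian_mul_mul_conjTranspose A hD
  let top : Fin (k + 1) → Fin M := σ ∘ Fin.castLE k.isLt
  let φ : EuclideanSpace ℂ (Fin M) →ₗ[ℂ] Fin k → ℂ := LinearMap.pi fun j =>
    EuclideanSpace.projₗ (ι (Fin.castLE k.isLt.le j)) ∘ₗ Matrix.toEuclideanLin Aᴴ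
  refine le_of_forall_re_inner_le (v := hT.eigenvectorBasis ∘ top)
    (hT.eigenvectorBasis.orthonormal.comp _ (σ.injective.comp (Fin.castLE_injective _)))
    (fun j => hT.toEuclideanLin_eigenvectorBasis (top j))
    (fun j => he (Fin.le_def.mpr (Nat.lt_succ_iff.mp j.isLt))) (S := LinearMap.ker φ) ?_ ?_
  · have := φ.finrank_le_card_add_finrank_ker
    simp only [finrank_euclideanSpace_fin, Fintype.card_fin] at this ⊢
    omega
  · intro x hx
    rw [Matrix.inner_toEuclideanLin_mul_mul_conjTranspose,
      ← Matrix.norm_toEuclideanLin_conjTranspose hA x]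
    refine Matrix.re_inner_toEuclideanLin_diagonal_le fun i => ?_
    by_cases hi : ∃ j < k, ι j = i
    · obtain ⟨j, hjk, rfl⟩ := hi
      exact .inl (congr_fun (LinearMap.mem_ker.mp hx) ⟨j, hjk⟩)
    · push Not at hi
      exact .inr (apply_le_apply_of_forall_lt_ne hanti (hmax k) hi)

/-- Eigenvalue upper bounds for a coisometry compression of a diagonal matrix
(Proposition 4, bound part): if `A` has orthonormal rows and `d` is a
nonnegative diagonal, with `ι` enumerating (in decreasing order) indices of
the `M` largest values of `d`, then `T = A (diagonal d) Aᴴ` is Hermitian and its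
`k`-th largest eigenvalue is at most `d (ι k)`. -/
theorem eigenvalues_coisometry_compression_le
    {n : Type*} [Fintype n] [DecidableEq n] (M : ℕ)
    (A : Matrix (Fin M) n ℂ) (hA : A * Aᴴ = 1)
    (d : n → ℝ) (hd : ∀ i, 0 ≤ d i)
    (ι : Fin M → n) (hι : Function.Injective ι)
    (hanti : Antitone (d ∘ ι))
    (hmax : ∀ k : Fin M, ∀ j, j ∉ Set.range ι → d j ≤ d (ι k)) :
    ∃ hT : (A * Matrix.diagonal (fun i => (d i : ℂ)) * Aᴴ).IsHermitian,
      ∀ e : Fin M → ℝ, Antitone e →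
        (∃ σ : Equiv.Perm (Fin M), e = hT.eigenvalues ∘ σ) →
        ∀ k : Fin M, e k ≤ d (ι k) :=
  eigenvalues_coisometry_compression_le_general M A hA d ι hanti hmax
end

section
/- Trace bound for a coisometry compression of a diagonal matrix: Let n be a finite type with decidable equality, M : ℕ, and let A : Matrix (Fin M) n ℂ satisfy A * Aᴴ = 1. Let d : n → ℝ with 0 ≤ d i for all i, and let s be a Finset of n with s.card = M such that d j ≤ d i for every i ∈ s and every j ∉ s. Then the real part of the trace of A * Matrix.diagonal (fun i => (d i : ℂ)) * Aᴴ is at most ∑_{i ∈ s} d i. -/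
/-!
The trace equals `∑ i, d i * c i` with `c i = ∑ k, ‖A k i‖ ^ 2 = (Aᴴ * A) i i`. Since `P = Aᴴ * A` is
a Hermitian idempotent, `c i = ∑ j, ‖P j i‖ ^ 2 ≥ c i ^ 2`, so `0 ≤ c i ≤ 1`, and `∑ i, c i = tr P = M`.
For such weights, choose `t` between the values of `d` on `s` and off `s`: every term
`(d i - t) * (c i - 𝟙ₛ i)` is nonpositive, and these terms sum to `∑ i, d i * c i - ∑ i ∈ s, d i`.
-/

open scoped Matrix
open Finset

theorem Finset.exists_threshold_of_forall_notMem_le {n : Type*} [Fintype n] {d : n → ℝ}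
    {s : Finset n} (hmax : ∀ i ∈ s, ∀ j ∉ s, d j ≤ d i) :
    ∃ t, (∀ i ∈ s, t ≤ d i) ∧ ∀ j ∉ s, d j ≤ t := by
  rcases s.eq_empty_or_nonempty with rfl | hs
  · obtain ⟨t, ht⟩ := (Set.finite_range d).bddAbove
    exact ⟨t, by simp, fun j _ => ht ⟨j, rfl⟩⟩
  · obtain ⟨i₀, hi₀, hmin⟩ := s.exists_mem_eq_inf' hs d
    exact ⟨d i₀, fun i hi => hmin ▸ s.inf'_le d hi, fun j hj => hmax i₀ hi₀ j hj⟩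

theorem Finset.sum_mul_le_sum_of_sum_eq_card {n : Type*} [Fintype n] {d c : n → ℝ}
    {s : Finset n} (hc₀ : ∀ i, 0 ≤ c i) (hc₁ : ∀ i, c i ≤ 1) (hc : ∑ i, c i = s.card)
    (hmax : ∀ i ∈ s, ∀ j ∉ s, d j ≤ d i) :
    ∑ i, d i * c i ≤ ∑ i ∈ s, d i := by
  classical
  obtain ⟨t, hts, htsc⟩ := exists_threshold_of_forall_notMem_le hmax
  set e : n → ℝ := fun i => if i ∈ s then 1 else 0
  have hterm : ∀ i, (d i - t) * (c i - e i) ≤ 0 := by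
    intro i
    by_cases hi : i ∈ s
    · simp only [e, if_pos hi]
      exact mul_nonpos_of_nonneg_of_nonpos (by linarith [hts i hi]) (by linarith [hc₁ i])
    · simp only [e, if_neg hi]
      exact mul_nonpos_of_nonpos_of_nonneg (by linarith [htsc i hi]) (by linarith [hc₀ i])
  have he : ∑ i, e i = s.card := by simp [e]
  have hde : ∑ i, d i * e i = ∑ i ∈ s, d i := by simp [e]
  calc ∑ i, d i * c i
      = ∑ i, (d i - t) * (c i - e i) + ∑ i, d i * e i + t * (∑ i, c i - ∑ i, e i) := by
        simp only [mul_sub, sub_mul, sum_sub_distrib, mul_sum]; ring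
    _ ≤ ∑ i ∈ s, d i := by
        rw [hde, hc, he, sub_self, mul_zero, add_zero]
        linarith [sum_nonpos fun i (_ : i ∈ univ) => hterm i]

namespace Matrix

variable {m n 𝕜 : Type*} [Fintype m] [RCLike 𝕜]

theorem conjTranspose_mul_self_apply_self (A : Matrix m n 𝕜) (i : n) :
    (Aᴴ * A) i i = ((∑ k, ‖A k i‖ ^ 2 : ℝ) : 𝕜) := by
  simp [mul_apply, RCLike.conj_mul]

variable [Fintype n]

theorem re_trace_mul_diagonal_mul_conjTranspose [DecidableEq n] (A : Matrix m n 𝕜)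
    (d : n → ℝ) :
    RCLike.re (A * diagonal (fun i => (d i : 𝕜)) * Aᴴ).trace =
      ∑ i, d i * ∑ k, ‖A k i‖ ^ 2 := by
  rw [trace_mul_cycle, Matrix.trace]
  simp [mul_diagonal, conjTranspose_mul_self_apply_self, mul_comm]

variable [DecidableEq m] {A : Matrix m n 𝕜}

theorem sum_sum_norm_sq_eq_card_of_mul_conjTranspose_eq_one (hA : A * Aᴴ = 1) :
    ∑ i, ∑ k, ‖A k i‖ ^ 2 = Fintype.card m := by
  have htr : (Aᴴ * A).trace = Fintype.card m := by
    rw [trace_mul_comm, hA, trace_one]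
  rw [Matrix.trace] at htr
  simp only [diag_apply, conjTranspose_mul_self_apply_self] at htr
  exact_mod_cast htr

theorem sum_norm_sq_le_one_of_mul_conjTranspose_eq_one (hA : A * Aᴴ = 1) (i : n) :
    ∑ k, ‖A k i‖ ^ 2 ≤ 1 := by
  have hP : (Aᴴ * A)ᴴ * (Aᴴ * A) = Aᴴ * A := by
    rw [conjTranspose_mul, conjTranspose_conjTranspose, Matrix.mul_assoc, ← Matrix.mul_assoc A,
      hA, Matrix.one_mul]
  have hcol := conjTranspose_mul_self_apply_self (Aᴴ * A) i
  rw [hP, conjTranspose_mul_self_apply_self, RCLike.ofReal_inj] at hcol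
  have hdiag : ‖(Aᴴ * A) i i‖ = ∑ k, ‖A k i‖ ^ 2 := by
    rw [conjTranspose_mul_self_apply_self, RCLike.norm_ofReal, abs_of_nonneg (by positivity)]
  have hsq : (∑ k, ‖A k i‖ ^ 2) ^ 2 ≤ ∑ k, ‖A k i‖ ^ 2 :=
    calc (∑ k, ‖A k i‖ ^ 2) ^ 2 = ‖(Aᴴ * A) i i‖ ^ 2 := by rw [hdiag]
      _ ≤ ∑ j, ‖(Aᴴ * A) j i‖ ^ 2 := single_le_sum (f := fun j => ‖(Aᴴ * A) j i‖ ^ 2)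
        (fun j _ => by positivity) (mem_univ i)
      _ = ∑ k, ‖A k i‖ ^ 2 := hcol.symm
  nlinarith

end Matrix

theorem trace_coisometry_compression_le_general
    {n : Type*} [Fintype n] [DecidableEq n] (M : ℕ)
    (A : Matrix (Fin M) n ℂ) (hA : A * Aᴴ = 1)
    (d : n → ℝ)
    (s : Finset n) (hcard : s.card = M)
    (hmax : ∀ i ∈ s, ∀ j ∉ s, d j ≤ d i) :
    (Matrix.trace (A * Matrix.diagonal (fun i => (d i : ℂ)) * Aᴴ)).re ≤
      ∑ i ∈ s, d i := by
  refine (Matrix.re_trace_mul_diagonal_mul_conjTranspose A d).trans_le ?_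
  refine Finset.sum_mul_le_sum_of_sum_eq_card (fun i => by positivity)
    (Matrix.sum_norm_sq_le_one_of_mul_conjTranspose_eq_one hA) ?_ hmax
  rw [Matrix.sum_sum_norm_sq_eq_card_of_mul_conjTranspose_eq_one hA, Fintype.card_fin, hcard]

/-- Trace bound for a coisometry compression of a diagonal matrix: if `A` has
orthonormal rows (`A Aᴴ = 1`) and `d` is nonnegative, then the trace of
`A (diagonal d) Aᴴ` is at most the sum of the `M` largest values of `d`
(collected in the `M`-element finset `s`). -/
theorem trace_coisometry_compression_le
    {n : Type*} [Fintype n] [DecidableEq n] (M : ℕ)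
    (A : Matrix (Fin M) n ℂ) (hA : A * Aᴴ = 1)
    (d : n → ℝ) (hd : ∀ i, 0 ≤ d i)
    (s : Finset n) (hcard : s.card = M)
    (hmax : ∀ i ∈ s, ∀ j ∉ s, d j ≤ d i) :
    (Matrix.trace (A * Matrix.diagonal (fun i => (d i : ℂ)) * Aᴴ)).re ≤
      ∑ i ∈ s, d i :=
  trace_coisometry_compression_le_general M A hA d s hcard hmax
end

section
/- The MMSE trace inequality for filter-bank sampling (Appendix E chain of inequalities): Let n be a finite type with decidable equality and M : ℕ. Let h : n → ℂ and x, ν : n → ℝ with 0 ≤ x i and 0 < ν i for every i. Set K := Matrix.diagonal (fun i => ((‖h i‖² * x i + ν i : ℝ) : ℂ)) and D := Matrix.diagonal (fun i => ((‖h i‖² * x i : ℝ) : ℂ)). Let S : Matrix (Fin M) n ℂ be such that S * K * Sᴴ is invertible, and let s be a Finset of n with s.card = M such that (‖h j‖² * x j)/(‖h j‖² * x j + ν j) ≤ (‖h i‖² * x i)/(‖h i‖² * x i + ν i) for every i ∈ s and every j ∉ s. Then the real part of the trace of (S * K * Sᴴ)⁻¹ * (S * D * Sᴴ) is at most ∑_{i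 ∈ s} (‖h i‖² * x i)/(‖h i‖² * x i + ν i). -/
/-!
Write `K = diag k` and `D = diag d` with `k = ‖h‖²x + ν > 0`, and set `W = S √K` and
`R = diag (d / k)`. Then `S K Sᴴ = W Wᴴ` and `S D Sᴴ = W R Wᴴ`, so by cyclicity the trace equals
`tr (P R)` with `P = Wᴴ (W Wᴴ)⁻¹ W` the orthogonal projection onto the row space of `W`.
The diagonal entries `Pᵢᵢ` lie in `[0, 1]` (as `0 ≤ P ≤ 1`) and sum to `tr P = M`, and a weighted
sum `∑ Pᵢᵢ rᵢ` with such weights is at most the sum of the `M` largest `rᵢ`.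
-/

open scoped Matrix

section Threshold

variable {ι : Type*} [Fintype ι]

lemma Finset.exists_threshold {α : Type*} [LinearOrder α] [Nonempty α] {r : ι → α}
    (s : Finset ι) (hr : ∀ i ∈ s, ∀ j ∉ s, r j ≤ r i) :
    ∃ m, (∀ i ∈ s, m ≤ r i) ∧ ∀ j ∉ s, r j ≤ m := by
  rcases s.eq_empty_or_nonempty with rfl | hs
  · obtain ⟨m, hm⟩ := (Set.finite_range r).bddAbove
    exact ⟨m, by simp, fun j _ => hm ⟨j, rfl⟩⟩
  · exact ⟨s.inf' hs r, fun i hi => s.inf'_le r hi,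
      fun j hj => s.le_inf' hs r fun i hi => hr i hi j hj⟩

lemma Finset.sum_mul_le_sum_of_threshold {R : Type*} [CommRing R] [PartialOrder R]
    [IsOrderedRing R] {p r : ι → R} {s : Finset ι} {m : R}
    (hs : ∀ i ∈ s, m ≤ r i) (hsc : ∀ j ∉ s, r j ≤ m)
    (hp0 : ∀ i, 0 ≤ p i) (hp1 : ∀ i, p i ≤ 1) (hp : ∑ i, p i = s.card) :
    ∑ i, p i * r i ≤ ∑ i ∈ s, r i := by
  classical
  have hin : ∑ i ∈ s, (p i - 1) * r i ≤ ∑ i ∈ s, (p i - 1) * m :=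
    Finset.sum_le_sum fun i hi =>
      mul_le_mul_of_nonpos_left (hs i hi) (sub_nonpos.2 (hp1 i))
  have hout : ∑ j ∈ sᶜ, p j * r j ≤ ∑ j ∈ sᶜ, p j * m :=
    Finset.sum_le_sum fun j hj =>
      mul_le_mul_of_nonneg_left (hsc j (Finset.mem_compl.1 hj)) (hp0 j)
  have hmass : ∑ i ∈ s, (p i - 1) * m + ∑ j ∈ sᶜ, p j * m = 0 := by
    rw [← Finset.sum_mul, ← Finset.sum_mul, ← add_mul, Finset.sum_sub_distrib,
      sub_add_eq_add_sub, Finset.sum_add_sum_compl, hp]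
    simp
  calc ∑ i, p i * r i
      = ∑ i ∈ s, r i + (∑ i ∈ s, (p i - 1) * r i + ∑ j ∈ sᶜ, p j * r j) := by
        rw [← Finset.sum_add_sum_compl s, add_left_comm, ← add_assoc, ← Finset.sum_add_distrib]
        simp [sub_mul]
    _ ≤ ∑ i ∈ s, r i + (∑ i ∈ s, (p i - 1) * m + ∑ j ∈ sᶜ, p j * m) := by gcongr
    _ = ∑ i ∈ s, r i := by rw [hmass, add_zero]

end Threshold

namespace Matrix

variable {m n 𝕜 : Type*} [Fintype n]

section Field

variable [Fintype m] [DecidableEq m] [Field 𝕜] [StarRing 𝕜] {W : Matrix m n 𝕜}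

noncomputable def rowSpaceProjection (W : Matrix m n 𝕜) : Matrix n n 𝕜 :=
  Wᴴ * (W * Wᴴ)⁻¹ * W

lemma isStarProjection_rowSpaceProjection (hW : IsUnit (W * Wᴴ).det) :
    IsStarProjection W.rowSpaceProjection where
  isIdempotentElem := by
    rw [IsIdempotentElem, rowSpaceProjection]
    simp only [Matrix.mul_assoc]
    rw [← Matrix.mul_assoc W Wᴴ, ← Matrix.mul_assoc (W * Wᴴ), mul_nonsing_inv _ hW,
      Matrix.one_mul]
  isSelfAdjoint := by
    have hinv : ((W * Wᴴ)⁻¹)ᴴ = (W * Wᴴ)⁻¹ := (isHermitian_mul_conjTranspose_self W).inv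
    simp only [IsSelfAdjoint, rowSpaceProjection, star_eq_conjTranspose, conjTranspose_mul,
      conjTranspose_conjTranspose, hinv, Matrix.mul_assoc]

lemma trace_rowSpaceProjection (hW : IsUnit (W * Wᴴ).det) :
    W.rowSpaceProjection.trace = Fintype.card m := by
  rw [rowSpaceProjection, Matrix.mul_assoc, trace_mul_comm, Matrix.mul_assoc,
    nonsing_inv_mul _ hW, trace_one]

lemma trace_inv_mul_eq_trace_rowSpaceProjection_mul (W : Matrix m n 𝕜) (A : Matrix n n 𝕜) :
    ((W * Wᴴ)⁻¹ * (W * A * Wᴴ)).trace = (W.rowSpaceProjection * A).trace := by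
  rw [rowSpaceProjection, ← Matrix.mul_assoc, trace_mul_comm]
  simp only [Matrix.mul_assoc]

end Field

lemma mul_diagonal_mul_conjTranspose [CommRing 𝕜] [StarRing 𝕜] [DecidableEq n]
    (S : Matrix m n 𝕜) (c d : n → 𝕜) :
    S * diagonal (fun i => c i * d i * star (c i)) * Sᴴ
      = S * diagonal c * diagonal d * (S * diagonal c)ᴴ := by
  simp only [conjTranspose_mul, diagonal_conjTranspose, ← Matrix.mul_assoc]
  congr 1
  simp only [Matrix.mul_assoc, diagonal_mul_diagonal, Pi.star_apply, mul_assoc]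

lemma mul_diagonal_ofReal_mul_conjTranspose [DecidableEq n] (S : Matrix m n ℂ) {k : n → ℝ}
    (hk : ∀ i, 0 ≤ k i) (d : n → ℝ) :
    S * diagonal (fun i => ((k i * d i : ℝ) : ℂ)) * Sᴴ
      = S * diagonal (fun i => ((√(k i) : ℝ) : ℂ)) * diagonal (fun i => (d i : ℂ))
        * (S * diagonal fun i => ((√(k i) : ℝ) : ℂ))ᴴ := by
  rw [← mul_diagonal_mul_conjTranspose]
  congr
  ext i
  rw [Complex.star_def, Complex.conj_ofReal, mul_right_comm, ← Complex.ofReal_mul,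
    ← Complex.ofReal_mul, Real.mul_self_sqrt (hk i)]

section RCLike

open scoped ComplexOrder MatrixOrder

variable [RCLike 𝕜] [DecidableEq n] {P : Matrix n n 𝕜}

lemma _root_.IsStarProjection.re_diag_mem_Icc (hP : IsStarProjection P) (i : n) :
    RCLike.re (P i i) ∈ Set.Icc 0 1 := by
  have h0 : 0 ≤ P i i := (nonneg_iff_posSemidef.1 hP.nonneg).diag_nonneg
  have h1 : 0 ≤ (1 - P) i i := (nonneg_iff_posSemidef.1 hP.one_sub_nonneg).diag_nonneg
  rw [sub_apply, one_apply_eq, sub_nonneg] at h1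
  exact ⟨(RCLike.nonneg_iff.1 h0).1, by simpa using (RCLike.le_iff_re_im.1 h1).1⟩

end RCLike

lemma re_trace_mul_diagonal_ofReal [DecidableEq n] (A : Matrix n n ℂ) (r : n → ℝ) :
    (A * diagonal fun i => (r i : ℂ)).trace.re = ∑ i, (A i i).re * r i := by
  simp only [trace, diag, mul_diagonal, Complex.re_sum, Complex.re_mul_ofReal]

end Matrix

/-- The MMSE trace inequality for filter-bank sampling (Appendix E chain of
inequalities): with `K = diagonal (‖h‖²x + ν)` and `D = diagonal (‖h‖²x)`,
for any `M`-branch filter matrix `S` with `S K Sᴴ` invertible, the trace of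
`(S K Sᴴ)⁻¹ (S D Sᴴ)` is at most the sum of the `M` largest values of
`‖h i‖²x i / (‖h i‖²x i + ν i)`. -/
theorem mmse_trace_le_sum_largest
    {n : Type*} [Fintype n] [DecidableEq n] (M : ℕ)
    (h : n → ℂ) (x ν : n → ℝ) (hx : ∀ i, 0 ≤ x i) (hν : ∀ i, 0 < ν i)
    (S : Matrix (Fin M) n ℂ)
    (hinv : IsUnit (S * Matrix.diagonal (fun i => ((‖h i‖ ^ 2 * x i + ν i : ℝ) : ℂ)) * Sᴴ).det)
    (s : Finset n) (hcard : s.card = M)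
    (hmax : ∀ i ∈ s, ∀ j ∉ s,
      (‖h j‖ ^ 2 * x j) / (‖h j‖ ^ 2 * x j + ν j) ≤
        (‖h i‖ ^ 2 * x i) / (‖h i‖ ^ 2 * x i + ν i)) :
    (Matrix.trace
        ((S * Matrix.diagonal (fun i => ((‖h i‖ ^ 2 * x i + ν i : ℝ) : ℂ)) * Sᴴ)⁻¹ *
          (S * Matrix.diagonal (fun i => ((‖h i‖ ^ 2 * x i : ℝ) : ℂ)) * Sᴴ))).re ≤
      ∑ i ∈ s, (‖h i‖ ^ 2 * x i) / (‖h i‖ ^ 2 * x i + ν i) := by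
  set k : n → ℝ := fun i => ‖h i‖ ^ 2 * x i + ν i
  set r : n → ℝ := fun i => ‖h i‖ ^ 2 * x i / k i
  have hk (i : n) : 0 < k i := by positivity [hx i, hν i]
  have hk₀ (i : n) : 0 ≤ k i := (hk i).le
  have hK := S.mul_diagonal_ofReal_mul_conjTranspose hk₀ 1
  have hD := S.mul_diagonal_ofReal_mul_conjTranspose hk₀ r
  simp only [Pi.one_apply, mul_one, Complex.ofReal_one, Matrix.diagonal_one, Matrix.mul_one] at hK
  simp only [r, mul_div_cancel₀ _ (hk _).ne'] at hD
  rw [hK] at hinv ⊢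
  rw [hD, Matrix.trace_inv_mul_eq_trace_rowSpaceProjection_mul,
    Matrix.re_trace_mul_diagonal_ofReal]
  have hP := Matrix.isStarProjection_rowSpaceProjection hinv
  obtain ⟨t, hts, htsc⟩ := s.exists_threshold hmax
  refine Finset.sum_mul_le_sum_of_threshold hts htsc (fun i => (hP.re_diag_mem_Icc i).1)
    (fun i => (hP.re_diag_mem_Icc i).2) ?_
  simpa [Matrix.trace, hcard] using congrArg Complex.re (Matrix.trace_rowSpaceProjection hinv)
end

section
/- Asymptotic equivalence of the Gram matrix of a block-Toeplitz channel matrix with its Toeplitz extension (Lemma 5): Fix k : ℕ with k ≥ 1, a constant ε > 1, and h : ℤ → (Fin k → ℂ). Write a i := ∑_{m : Fin k} ‖h i m‖ for the ℓ¹-norm of the i-th block. Assume the family i ↦ a i is summable, and that h decays as o(|i|^{−ε}): for every δ > 0 there exists T such that a i ≤ δ · |i|^{−ε} whenever |i| ≥ T. For each n ≥ 1 define A_n, B_n : Matrix (Fin n) (Fin n) ℂ by (A_n)_{i j} = ∑_{l = 0}^{n−1} ∑_{m : Fin k} h ((i:ℤ) − l) m · conj (h ((j:ℤ) − l) m) and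 (B_n)_{i j} = ∑'_{l : ℤ} ∑_{m : Fin k} h ((i:ℤ) − l) m · conj (h ((j:ℤ) − l) m). Then (i) (1/n) · ‖B_n − A_n‖_F² → 0 as n → ∞, where ‖·‖_F is the Frobenius norm, and (ii) there exists a constant c′ such that for all n, the ℓ²-operator norms of A_n and B_n are both at most c′. -/
open scoped Matrix

/-- The truncated Gram matrix `A_n = H̃ⁿ (H̃ⁿ)*` of the discretized block-Toeplitz
channel matrix, with entries `∑_{l=0}^{n-1} ∑_m h(i−l)_m conj (h(j−l)_m)`. -/
noncomputable def gramTrunc (k : ℕ) (h : ℤ → Fin k → ℂ) (n : ℕ) :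
    Matrix (Fin n) (Fin n) ℂ :=
  Matrix.of fun i j : Fin n =>
    ∑ l ∈ Finset.range n, ∑ m : Fin k,
      h ((i : ℤ) - (l : ℤ)) m * (starRingEnd ℂ) (h ((j : ℤ) - (l : ℤ)) m)

/-- The Hermitian Toeplitz extension `B_n = Ĥⁿ`, with entries
`∑'_{l ∈ ℤ} ∑_m h(i−l)_m conj (h(j−l)_m)`. -/
noncomputable def gramToeplitz (k : ℕ) (h : ℤ → Fin k → ℂ) (n : ℕ) :
    Matrix (Fin n) (Fin n) ℂ :=
  Matrix.of fun i j : Fin n =>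
    ∑' l : ℤ, ∑ m : Fin k,
      h ((i : ℤ) - l) m * (starRingEnd ℂ) (h ((j : ℤ) - l) m)

/-!
Write `b i = ‖h̃ᵢ‖₁` and `S = ∑ b i`. Each entry of `A_n` and of `B_n` is dominated by
`∑_l b (i - l) b (j - l)`, whose row and column sums are at most `S²`, so the Schur test bounds
both operator norms by `S²`. The difference `B_n - A_n` only involves the indices `l < 0` and
`l ≥ n`: its entries are at most `2 S²`, and its `i`-th row sum is at most `S` times the mass of
`b` beyond `i` plus the mass of `b ∘ neg` beyond `n - 1 - i`. These tails tend to `0`, hence so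
do their Cesàro means, and `(1/n) ‖B_n - A_n‖_F² ≤ 2 S³ · (Cesàro means) → 0`.
-/

open Filter Topology Finset Function

lemma norm_sum_mul_le_sum_norm_mul_sum_norm {ι R : Type*} [SeminormedRing R] (s : Finset ι)
    (f g : ι → R) : ‖∑ m ∈ s, f m * g m‖ ≤ (∑ m ∈ s, ‖f m‖) * ∑ m ∈ s, ‖g m‖ := by
  rw [sum_mul_sum]
  refine (norm_sum_le _ _).trans (sum_le_sum fun m hm => (norm_mul_le _ _).trans ?_)
  exact single_le_sum (f := fun m' => ‖f m‖ * ‖g m'‖) (fun _ _ => by positivity) hm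

lemma Matrix.norm_toEuclideanCLM_le_of_sum_norm_le {𝕜 ι : Type*} [RCLike 𝕜] [Fintype ι]
    [DecidableEq ι] (M : Matrix ι ι 𝕜) {K : ℝ} (hK : 0 ≤ K)
    (hrow : ∀ i, ∑ j, ‖M i j‖ ≤ K) (hcol : ∀ j, ∑ i, ‖M i j‖ ≤ K) :
    ‖Matrix.toEuclideanCLM (𝕜 := 𝕜) M‖ ≤ K := by
  refine ContinuousLinearMap.opNorm_le_bound _ hK fun x => ?_
  have hrow_sq : ∀ i, ‖(Matrix.toEuclideanCLM (𝕜 := 𝕜) M x) i‖ ^ 2 ≤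
      K * ∑ j, ‖M i j‖ * ‖x j‖ ^ 2 := fun i =>
    calc ‖(Matrix.toEuclideanCLM (𝕜 := 𝕜) M x) i‖ ^ 2 ≤ (∑ j, ‖M i j‖ * ‖x j‖) ^ 2 := by
          rw [Matrix.ofLp_toEuclideanCLM]
          gcongr
          exact norm_sum_le_of_le _ fun j _ => norm_mul_le _ _
      _ ≤ (∑ j, ‖M i j‖) * ∑ j, ‖M i j‖ * ‖x j‖ ^ 2 :=
          sum_sq_le_sum_mul_sum_of_sq_le_mul _ (fun _ _ => norm_nonneg _)
            (fun _ _ => by positivity) fun _ _ => le_of_eq (by ring)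
      _ ≤ K * ∑ j, ‖M i j‖ * ‖x j‖ ^ 2 := by
          gcongr
          exact hrow i
  refine (pow_le_pow_iff_left₀ (norm_nonneg _) (by positivity) two_ne_zero).1 ?_
  calc ‖Matrix.toEuclideanCLM (𝕜 := 𝕜) M x‖ ^ 2
      = ∑ i, ‖(Matrix.toEuclideanCLM (𝕜 := 𝕜) M x) i‖ ^ 2 := EuclideanSpace.norm_sq_eq _
    _ ≤ ∑ i, K * ∑ j, ‖M i j‖ * ‖x j‖ ^ 2 := sum_le_sum fun i _ => hrow_sq i
    _ = K * ∑ j, (∑ i, ‖M i j‖) * ‖x j‖ ^ 2 := by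
          rw [← mul_sum, sum_comm]
          simp_rw [sum_mul]
    _ ≤ K * ∑ j, K * ‖x j‖ ^ 2 := by
          gcongr with j
          exact hcol j
    _ = (K * ‖x‖) ^ 2 := by rw [← mul_sum, mul_pow, EuclideanSpace.norm_sq_eq, sq, mul_assoc]

lemma sum_comp_le_tsum_of_injective {ι α : Type*} [Fintype ι] {b : α → ℝ} (hb0 : ∀ a, 0 ≤ b a)
    (hb : Summable b) {e : ι → α} (he : Injective e) : ∑ j, b (e j) ≤ ∑' a, b a :=
  (tsum_fintype (fun j => b (e j))).symm.trans_le (tsum_comp_le_tsum_of_inj hb hb0 he)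

lemma sum_tsum_mul_le {ι α : Type*} [Fintype ι] {f : α → ℝ} {g : ι → α → ℝ} {C : ℝ}
    (hf0 : ∀ q, 0 ≤ f q) (hf : Summable f) (hg0 : ∀ j q, 0 ≤ g j q)
    (hgC : ∀ q, ∑ j, g j q ≤ C) :
    ∑ j, ∑' q, f q * g j q ≤ C * ∑' q, f q := by
  have hsummable : ∀ j, Summable fun q => f q * g j q := fun j =>
    Summable.of_nonneg_of_le (fun q => mul_nonneg (hf0 q) (hg0 j q))
      (fun q => mul_le_mul_of_nonneg_left
        ((single_le_sum (fun j _ => hg0 j q) (mem_univ j)).trans (hgC q)) (hf0 q))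
      (hf.mul_right C)
  rw [← Summable.tsum_finsetSum fun j _ => hsummable j, ← tsum_mul_left]
  refine Summable.tsum_le_tsum (fun q => ?_) (summable_sum fun j _ => hsummable j)
    (hf.mul_left C)
  rw [← mul_sum, mul_comm]
  exact mul_le_mul_of_nonneg_right (hgC q) (hf0 q)

section Majorant

variable {b : ℤ → ℝ}

lemma summable_mul_comp_sub {α : Type*} (hb0 : ∀ p, 0 ≤ b p) (hb : Summable b) {c : α → ℤ}
    (hc : Injective c) (i j : ℤ) : Summable fun q => b (i - c q) * b (j - c q) :=
  Summable.of_nonneg_of_le (fun _ => mul_nonneg (hb0 _) (hb0 _))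
    (fun _ => mul_le_mul_of_nonneg_left (hb.le_tsum _ fun p _ => hb0 p) (hb0 _))
    ((hb.comp_injective (sub_right_injective.comp hc)).mul_right _)

lemma sum_tsum_mul_comp_sub_le {α : Type*} (hb0 : ∀ p, 0 ≤ b p) (hb : Summable b) {c : α → ℤ}
    (hc : Injective c) (n : ℕ) (i : ℤ) :
    ∑ j : Fin n, ∑' q, b (i - c q) * b (j - c q) ≤ (∑' p, b p) * ∑' q, b (i - c q) :=
  sum_tsum_mul_le (fun _ => hb0 _) (hb.comp_injective (sub_right_injective.comp hc))
    (fun _ _ => hb0 _) fun q =>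
      sum_comp_le_tsum_of_injective hb0 hb fun j₁ j₂ hj => Fin.ext (by simpa using hj)

lemma sum_tsum_mul_sub_le_sq (hb0 : ∀ p, 0 ≤ b p) (hb : Summable b) (n : ℕ) (i : ℤ) :
    ∑ j : Fin n, ∑' l, b (i - l) * b (j - l) ≤ (∑' p, b p) ^ 2 := by
  refine (sum_tsum_mul_comp_sub_le hb0 hb injective_id n i).trans_eq ?_
  rw [sq]
  congr 1
  exact (Equiv.subLeft i).tsum_eq b

lemma norm_toEuclideanCLM_le_of_norm_le_tsum_mul_sub (hb0 : ∀ p, 0 ≤ b p) (hb : Summable b)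
    {n : ℕ} (M : Matrix (Fin n) (Fin n) ℂ)
    (hM : ∀ i j : Fin n, ‖M i j‖ ≤ ∑' l, b (i - l) * b (j - l)) :
    ‖Matrix.toEuclideanCLM (𝕜 := ℂ) M‖ ≤ (∑' p, b p) ^ 2 :=
  M.norm_toEuclideanCLM_le_of_sum_norm_le (sq_nonneg _)
    (fun i => (sum_le_sum fun j _ => hM i j).trans (sum_tsum_mul_sub_le_sq hb0 hb n i))
    fun j => (sum_le_sum fun i _ => (hM i j).trans_eq (tsum_congr fun _ => mul_comm _ _)).trans
      (sum_tsum_mul_sub_le_sq hb0 hb n j)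

end Majorant

/-- No summability is needed: if `b` is not summable, every tail is the junk value `0`. -/
lemma tendsto_inv_mul_sum_tsum_tail (b : ℤ → ℝ) :
    Tendsto (fun n : ℕ => (n : ℝ)⁻¹ * ∑ i : Fin n, ∑' q : ℕ, b (i + q + 1)) atTop (𝓝 0) := by
  have htail : Tendsto (fun i : ℕ => ∑' q : ℕ, b (i + q + 1)) atTop (𝓝 0) :=
    ((tendsto_sum_nat_add fun p : ℕ => b p).comp (tendsto_add_atTop_nat 1)).congr fun i =>
      tsum_congr fun q => congrArg b (by push_cast; ring)
  simpa only [Fin.sum_univ_eq_sum_range (fun i => ∑' q : ℕ, b (i + q + 1))] using htail.cesaro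

lemma sum_tsum_sub_add_eq_sum_tsum_neg (b : ℤ → ℝ) (n : ℕ) :
    ∑ i : Fin n, ∑' q : ℕ, b (i - (q + n)) = ∑ i : Fin n, ∑' q : ℕ, b (-(i + q + 1)) :=
  Fintype.sum_equiv Fin.revPerm _ _ fun i => tsum_congr fun q => congrArg b <| by
    simp only [Fin.revPerm_apply, Fin.val_rev]
    omega

section Gram

variable {k : ℕ} (h : ℤ → Fin k → ℂ)

noncomputable def blockNorm (i : ℤ) : ℝ := ∑ m, ‖h i m‖

noncomputable def gramTerm (i j l : ℤ) : ℂ := ∑ m, h (i - l) m * starRingEnd ℂ (h (j - l) m)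

lemma blockNorm_nonneg (i : ℤ) : 0 ≤ blockNorm h i := sum_nonneg fun _ _ => norm_nonneg _

lemma norm_gramTerm_le (i j l : ℤ) :
    ‖gramTerm h i j l‖ ≤ blockNorm h (i - l) * blockNorm h (j - l) := by
  simpa only [gramTerm, blockNorm, RCLike.norm_conj] using
    norm_sum_mul_le_sum_norm_mul_sum_norm univ (h (i - l)) fun m => starRingEnd ℂ (h (j - l) m)

lemma gramTrunc_apply (n : ℕ) (i j : Fin n) :
    gramTrunc k h n i j = ∑ l ∈ range n, gramTerm h i j l :=
  rfl

lemma gramToeplitz_apply (n : ℕ) (i j : Fin n) :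
    gramToeplitz k h n i j = ∑' l, gramTerm h i j l :=
  rfl

variable {h}

lemma norm_tsum_gramTerm_le (hsum : Summable (blockNorm h)) {α : Type*} {c : α → ℤ}
    (hc : Injective c) (i j : ℤ) :
    ‖∑' q, gramTerm h i j (c q)‖ ≤ ∑' q, blockNorm h (i - c q) * blockNorm h (j - c q) :=
  tsum_of_norm_bounded (summable_mul_comp_sub (blockNorm_nonneg h) hsum hc i j).hasSum
    fun q => norm_gramTerm_le h i j (c q)

lemma norm_gramToeplitz_apply_le (hsum : Summable (blockNorm h)) (n : ℕ) (i j : Fin n) :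
    ‖gramToeplitz k h n i j‖ ≤ ∑' l, blockNorm h (i - l) * blockNorm h (j - l) :=
  norm_tsum_gramTerm_le hsum injective_id i j

lemma norm_gramTrunc_apply_le (hsum : Summable (blockNorm h)) (n : ℕ) (i j : Fin n) :
    ‖gramTrunc k h n i j‖ ≤ ∑' l, blockNorm h (i - l) * blockNorm h (j - l) := by
  have hsummable := summable_mul_comp_sub (blockNorm_nonneg h) hsum injective_id i j
  have hnonneg : ∀ l, 0 ≤ blockNorm h (i - l) * blockNorm h (j - l) := fun l =>
    mul_nonneg (blockNorm_nonneg h _) (blockNorm_nonneg h _)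
  rw [gramTrunc_apply]
  calc ‖∑ l ∈ range n, gramTerm h i j l‖
      ≤ ∑ l ∈ range n, blockNorm h (i - l) * blockNorm h (j - l) :=
        norm_sum_le_of_le _ fun l _ => norm_gramTerm_le h i j l
    _ ≤ ∑' l : ℕ, blockNorm h (i - l) * blockNorm h (j - l) :=
        (hsummable.comp_injective Nat.cast_injective).sum_le_tsum _ fun l _ => hnonneg l
    _ ≤ ∑' l, blockNorm h (i - l) * blockNorm h (j - l) :=
        tsum_comp_le_tsum_of_inj hsummable hnonneg Nat.cast_injective

lemma gramToeplitz_sub_gramTrunc_apply (hsum : Summable (blockNorm h)) (n : ℕ) (i j : Fin n) :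
    gramToeplitz k h n i j - gramTrunc k h n i j =
      ∑' q : ℕ, gramTerm h i j (q + n) + ∑' q : ℕ, gramTerm h i j (-(q + 1)) := by
  have hterm : Summable (gramTerm h i j) :=
    .of_norm_bounded (summable_mul_comp_sub (blockNorm_nonneg h) hsum injective_id i j)
      (norm_gramTerm_le h i j)
  have hnat : Summable fun q : ℕ => gramTerm h i j q := hterm.comp_injective Nat.cast_injective
  have hneg : Summable fun q : ℕ => gramTerm h i j (-(q + 1)) :=
    hterm.comp_injective fun a b hab => by simpa using hab
  rw [gramToeplitz_apply, gramTrunc_apply, tsum_of_nat_of_neg_add_one hnat hneg,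
    ← hnat.sum_add_tsum_nat_add n]
  push_cast
  ring

lemma sum_norm_gramToeplitz_sub_gramTrunc_apply_le (hsum : Summable (blockNorm h)) (n : ℕ)
    (i : Fin n) :
    ∑ j, ‖gramToeplitz k h n i j - gramTrunc k h n i j‖ ≤ (∑' p, blockNorm h p) *
      (∑' q : ℕ, blockNorm h (i - (q + n)) + ∑' q : ℕ, blockNorm h (i + q + 1)) := by
  have hright : Injective fun q : ℕ => (q : ℤ) + n := fun a b hab => by simpa using hab
  have hleft : Injective fun q : ℕ => -((q : ℤ) + 1) := fun a b hab => by simpa using hab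
  calc ∑ j, ‖gramToeplitz k h n i j - gramTrunc k h n i j‖
      ≤ ∑ j : Fin n, (∑' q : ℕ, blockNorm h (i - (q + n)) * blockNorm h (j - (q + n)) +
          ∑' q : ℕ, blockNorm h (i - -(q + 1)) * blockNorm h (j - -(q + 1))) :=
        sum_le_sum fun j _ => by
          rw [gramToeplitz_sub_gramTrunc_apply hsum]
          exact (norm_add_le _ _).trans (add_le_add (norm_tsum_gramTerm_le hsum hright i j)
            (norm_tsum_gramTerm_le hsum hleft i j))
    _ ≤ (∑' p, blockNorm h p) * ∑' q : ℕ, blockNorm h (i - (q + n)) +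
          (∑' p, blockNorm h p) * ∑' q : ℕ, blockNorm h (i - -(q + 1)) := by
        rw [sum_add_distrib]
        exact add_le_add (sum_tsum_mul_comp_sub_le (blockNorm_nonneg h) hsum hright n i)
          (sum_tsum_mul_comp_sub_le (blockNorm_nonneg h) hsum hleft n i)
    _ = _ := by
        rw [mul_add]
        simp only [sub_neg_eq_add, add_assoc]

lemma sum_sum_norm_gramToeplitz_sub_gramTrunc_sq_le (hsum : Summable (blockNorm h)) (n : ℕ) :
    ∑ i : Fin n, ∑ j : Fin n, ‖gramToeplitz k h n i j - gramTrunc k h n i j‖ ^ 2 ≤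
      2 * (∑' p, blockNorm h p) ^ 3 * (∑ i : Fin n, ∑' q : ℕ, blockNorm h (i + q + 1) +
        ∑ i : Fin n, ∑' q : ℕ, blockNorm h (-(i + q + 1))) := by
  set S := ∑' p, blockNorm h p
  have hmaj : ∀ i j : Fin n, ∑' l, blockNorm h (i - l) * blockNorm h (j - l) ≤ S ^ 2 :=
    fun i j => (single_le_sum (fun j _ => tsum_nonneg fun _ =>
      mul_nonneg (blockNorm_nonneg h _) (blockNorm_nonneg h _)) (mem_univ j)).trans
        (sum_tsum_mul_sub_le_sq (blockNorm_nonneg h) hsum n i)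
  have hentry : ∀ i j : Fin n, ‖gramToeplitz k h n i j - gramTrunc k h n i j‖ ≤ 2 * S ^ 2 :=
    fun i j => (norm_sub_le _ _).trans <| by
      linarith [(norm_gramToeplitz_apply_le hsum n i j).trans (hmaj i j),
        (norm_gramTrunc_apply_le hsum n i j).trans (hmaj i j)]
  calc ∑ i : Fin n, ∑ j : Fin n, ‖gramToeplitz k h n i j - gramTrunc k h n i j‖ ^ 2
      ≤ ∑ i : Fin n, ∑ j : Fin n, 2 * S ^ 2 * ‖gramToeplitz k h n i j - gramTrunc k h n i j‖ := by
        gcongr with i _ j _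
        rw [sq]
        exact mul_le_mul_of_nonneg_right (hentry i j) (norm_nonneg _)
    _ = 2 * S ^ 2 * ∑ i : Fin n, ∑ j, ‖gramToeplitz k h n i j - gramTrunc k h n i j‖ := by
        simp_rw [mul_sum]
    _ ≤ 2 * S ^ 2 * ∑ i : Fin n, S *
          (∑' q : ℕ, blockNorm h (i - (q + n)) + ∑' q : ℕ, blockNorm h (i + q + 1)) := by
        gcongr with i
        exact sum_norm_gramToeplitz_sub_gramTrunc_apply_le hsum n i
    _ = _ := by
        rw [← mul_sum, sum_add_distrib, sum_tsum_sub_add_eq_sum_tsum_neg]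
        ring

end Gram

theorem gramToeplitz_asymptotically_equivalent_gramTrunc_general
    (k : ℕ) (h : ℤ → Fin k → ℂ)
    (hsum : Summable (fun i : ℤ => ∑ m : Fin k, ‖h i m‖)) :
    Filter.Tendsto
      (fun n : ℕ => (1 / (n : ℝ)) *
        ∑ i : Fin n, ∑ j : Fin n,
          ‖gramToeplitz k h n i j - gramTrunc k h n i j‖ ^ 2)
      Filter.atTop (nhds 0) ∧
    ∃ c' : ℝ, ∀ n : ℕ,
      ‖Matrix.toEuclideanCLM (𝕜 := ℂ) (gramTrunc k h n)‖ ≤ c' ∧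
      ‖Matrix.toEuclideanCLM (𝕜 := ℂ) (gramToeplitz k h n)‖ ≤ c' := by
  set S := ∑' p, blockNorm h p
  refine ⟨?_, S ^ 2, fun n => ⟨?_, ?_⟩⟩
  · have hlim := ((tendsto_inv_mul_sum_tsum_tail (blockNorm h)).add
      (tendsto_inv_mul_sum_tsum_tail fun p => blockNorm h (-p))).const_mul (2 * S ^ 3)
    rw [add_zero, mul_zero] at hlim
    refine squeeze_zero (fun n => by positivity) (fun n => ?_) hlim
    rw [one_div, ← mul_add, mul_left_comm]
    exact mul_le_mul_of_nonneg_left (sum_sum_norm_gramToeplitz_sub_gramTrunc_sq_le hsum n)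
      (by positivity)
  · exact norm_toEuclideanCLM_le_of_norm_le_tsum_mul_sub (blockNorm_nonneg h) hsum _
      (norm_gramTrunc_apply_le hsum n)
  · exact norm_toEuclideanCLM_le_of_norm_le_tsum_mul_sub (blockNorm_nonneg h) hsum _
      (norm_gramToeplitz_apply_le hsum n)

/-- Asymptotic equivalence of the Gram matrix of a block-Toeplitz channel
matrix with its Toeplitz extension (Lemma 5): under ℓ¹-summability and
`o(|i|^{-ε})` decay (ε > 1) of the block ℓ¹-norms, the normalized squared
Frobenius norm of the difference tends to `0`, and the ℓ²-operator norms of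
both sequences are uniformly bounded. -/
theorem gramToeplitz_asymptotically_equivalent_gramTrunc
    (k : ℕ) (hk : 1 ≤ k) (ε : ℝ) (hε : 1 < ε) (h : ℤ → Fin k → ℂ)
    (hsum : Summable (fun i : ℤ => ∑ m : Fin k, ‖h i m‖))
    (hdecay : ∀ δ : ℝ, 0 < δ → ∃ T : ℝ, ∀ i : ℤ, T ≤ |(i : ℝ)| →
      (∑ m : Fin k, ‖h i m‖) ≤ δ * |(i : ℝ)| ^ (-ε)) :
    Filter.Tendsto
      (fun n : ℕ => (1 / (n : ℝ)) *
        ∑ i : Fin n, ∑ j : Fin n,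
          ‖gramToeplitz k h n i j - gramTrunc k h n i j‖ ^ 2)
      Filter.atTop (nhds 0) ∧
    ∃ c' : ℝ, ∀ n : ℕ,
      ‖Matrix.toEuclideanCLM (𝕜 := ℂ) (gramTrunc k h n)‖ ≤ c' ∧
      ‖Matrix.toEuclideanCLM (𝕜 := ℂ) (gramToeplitz k h n)‖ ≤ c' :=
  gramToeplitz_asymptotically_equivalent_gramTrunc_general k h hsum
end

section
/- Asymptotic equivalence is preserved under matrix inversion with uniformly bounded inverses: For each n : ℕ let A_n, B_n : Matrix (Fin n) (Fin n) ℂ be invertible matrices, and suppose there exists K such that for all n the ℓ²-operator norms of (A_n)⁻¹ and (B_n)⁻¹ are at most K. If (1/√n) · ‖A_n − B_n‖_F → 0 as n → ∞, where ‖·‖_F denotes the Frobenius norm, then (1/√n) · ‖(A_n)⁻¹ − (B_n)⁻¹‖_F → 0 as n → ∞. -/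
/-!
Since `A⁻¹ - B⁻¹ = A⁻¹ (B - A) B⁻¹`, it suffices that the Frobenius norm is an ideal norm with
respect to the ℓ²-operator norm: `‖M X‖_F ≤ ‖M‖ ‖X‖_F` (apply the operator bound column by
column) and, via conjugate transposes, `‖X M‖_F ≤ ‖M‖ ‖X‖_F`. Hence
`‖A⁻¹ - B⁻¹‖_F ≤ K² ‖A - B‖_F` for every `n`, and the normalized sequence is squeezed to `0`.
-/

open scoped Matrix

/-- The Frobenius norm of a complex square matrix. -/
noncomputable def frobNorm {n : ℕ} (X : Matrix (Fin n) (Fin n) ℂ) : ℝ :=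
  Real.sqrt (∑ i : Fin n, ∑ j : Fin n, ‖X i j‖ ^ 2)

open Matrix WithLp

lemma frobNorm_nonneg {n : ℕ} (X : Matrix (Fin n) (Fin n) ℂ) : 0 ≤ frobNorm X :=
  Real.sqrt_nonneg _

lemma frobNorm_eq_sqrt_sum_norm_col_sq {n : ℕ} (X : Matrix (Fin n) (Fin n) ℂ) :
    frobNorm X = Real.sqrt (∑ j, ‖toLp 2 (Xᵀ j)‖ ^ 2) := by
  simp only [frobNorm, EuclideanSpace.norm_sq_eq, transpose_apply]
  rw [Finset.sum_comm]

lemma frobNorm_conjTranspose {n : ℕ} (X : Matrix (Fin n) (Fin n) ℂ) :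
    frobNorm Xᴴ = frobNorm X := by
  rw [frobNorm, frobNorm, Finset.sum_comm]
  simp only [conjTranspose_apply, norm_star]

lemma frobNorm_sub_comm {n : ℕ} (X Y : Matrix (Fin n) (Fin n) ℂ) :
    frobNorm (X - Y) = frobNorm (Y - X) := by
  simp only [frobNorm, Matrix.sub_apply, norm_sub_rev]

lemma frobNorm_mul_le_left {n : ℕ} (M X : Matrix (Fin n) (Fin n) ℂ) :
    frobNorm (M * X) ≤ ‖toEuclideanCLM (𝕜 := ℂ) M‖ * frobNorm X := by
  have hcol : ∀ j, toLp 2 ((M * X)ᵀ j) = toEuclideanCLM (𝕜 := ℂ) M (toLp 2 (Xᵀ j)) :=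
    fun _ => rfl
  rw [frobNorm_eq_sqrt_sum_norm_col_sq, frobNorm_eq_sqrt_sum_norm_col_sq,
    ← Real.sqrt_sq (norm_nonneg (toEuclideanCLM (𝕜 := ℂ) M)), ← Real.sqrt_mul (sq_nonneg _),
    Finset.mul_sum]
  gcongr with j
  rw [hcol, ← mul_pow]
  gcongr
  exact (toEuclideanCLM (𝕜 := ℂ) M).le_opNorm _

lemma norm_toEuclideanCLM_conjTranspose {n : ℕ} (M : Matrix (Fin n) (Fin n) ℂ) :
    ‖toEuclideanCLM (𝕜 := ℂ) Mᴴ‖ = ‖toEuclideanCLM (𝕜 := ℂ) M‖ :=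
  Matrix.l2_opNorm_conjTranspose M

lemma frobNorm_mul_le_right {n : ℕ} (X M : Matrix (Fin n) (Fin n) ℂ) :
    frobNorm (X * M) ≤ ‖toEuclideanCLM (𝕜 := ℂ) M‖ * frobNorm X := by
  rw [← frobNorm_conjTranspose, conjTranspose_mul, ← frobNorm_conjTranspose X,
    ← norm_toEuclideanCLM_conjTranspose M]
  exact frobNorm_mul_le_left _ _

lemma frobNorm_inv_sub_inv_le {n : ℕ} {A B : Matrix (Fin n) (Fin n) ℂ}
    (h : IsUnit A ↔ IsUnit B) :
    frobNorm (A⁻¹ - B⁻¹) ≤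
      ‖toEuclideanCLM (𝕜 := ℂ) A⁻¹‖ * ‖toEuclideanCLM (𝕜 := ℂ) B⁻¹‖ * frobNorm (A - B) := by
  rw [inv_sub_inv h, mul_assoc, mul_assoc, frobNorm_sub_comm]
  calc frobNorm (A⁻¹ * ((B - A) * B⁻¹))
      ≤ ‖toEuclideanCLM (𝕜 := ℂ) A⁻¹‖ * frobNorm ((B - A) * B⁻¹) := frobNorm_mul_le_left _ _
    _ ≤ _ := by gcongr; exact frobNorm_mul_le_right _ _

/-- Asymptotic equivalence is preserved under matrix inversion with uniformly
bounded inverses: if the inverses of `A n` and `B n` have ℓ²-operator norms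
bounded by `K` uniformly in `n`, and `(1/√n)‖A n − B n‖_F → 0`, then
`(1/√n)‖(A n)⁻¹ − (B n)⁻¹‖_F → 0`. -/
theorem asymptotic_equivalence_of_inverses
    (A B : (n : ℕ) → Matrix (Fin n) (Fin n) ℂ)
    (hAinv : ∀ n, IsUnit (A n).det) (hBinv : ∀ n, IsUnit (B n).det)
    (K : ℝ)
    (hAbd : ∀ n, ‖Matrix.toEuclideanCLM (𝕜 := ℂ) ((A n)⁻¹)‖ ≤ K)
    (hBbd : ∀ n, ‖Matrix.toEuclideanCLM (𝕜 := ℂ) ((B n)⁻¹)‖ ≤ K)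
    (hfro : Filter.Tendsto
      (fun n : ℕ => (1 / Real.sqrt n) * frobNorm (A n - B n))
      Filter.atTop (nhds 0)) :
    Filter.Tendsto
      (fun n : ℕ => (1 / Real.sqrt n) * frobNorm ((A n)⁻¹ - (B n)⁻¹))
      Filter.atTop (nhds 0) := by
  have hK : 0 ≤ K := (norm_nonneg _).trans (hAbd 0)
  have hbound : ∀ n, frobNorm ((A n)⁻¹ - (B n)⁻¹) ≤ K * K * frobNorm (A n - B n) := by
    intro n
    have hunit : IsUnit (A n) ↔ IsUnit (B n) := by
      simp only [isUnit_iff_isUnit_det, hAinv n, hBinv n]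
    exact (frobNorm_inv_sub_inv_le hunit).trans <| mul_le_mul_of_nonneg_right
      (mul_le_mul (hAbd n) (hBbd n) (norm_nonneg _) hK) (frobNorm_nonneg _)
  have hlim := hfro.const_mul (K * K)
  rw [mul_zero] at hlim
  refine squeeze_zero (fun n => by positivity [frobNorm_nonneg ((A n)⁻¹ - (B n)⁻¹)])
    (fun n => ?_) hlim
  rw [mul_left_comm]
  gcongr
  exact hbound n
end
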